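/- Suppose Assumption (*) holds for the two-sided cell c. Then for every d ∈ D the family {C_d T_u + H_{<c} : u ∈ U_d} is A-linearly independent in the quotient H / H_{<c}. -/

import Mathlib

/-!
By (iv) with `b = e`, `C_d T_u ≡ T_{du}` modulo `H_{<0} + H_{<c}`, and `du ∈ c`; the ideal
`H_{<c}` is spanned by the `C_z ≡ T_z` (mod `H_{<0}`) with `z ∉ c`. So the elements
`T_{du} + (H_{<0}-part)` together with the `C_z`, `z < c`, are unitriangular modulo `A_{<0}` over
pairwise distinct `T_w`, hence linearly independent; in particular the span of the former meets
`H_{<c}` trivially.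
-/

open scoped Classical TensorProduct

noncomputable section

namespace KL

variable (Γ : Type) [AddCommGroup Γ] [LinearOrder Γ] [IsOrderedAddMonoid Γ]

/-- The group ring `A = ℤ[Γ]`. -/
abbrev A := AddMonoidAlgebra ℤ Γ

variable {Γ}

/-- The basis element `q^γ` of `A`. -/
def qe (γ : Γ) : A Γ := AddMonoidAlgebra.single γ 1

/-- `A_{<0}`: the ℤ-span of the `q^γ` with `γ < 0`, i.e. elements supported in negative degrees. -/
def Alt0 (Γ : Type) [AddCommGroup Γ] [LinearOrder Γ] [IsOrderedAddMonoid Γ] : Set (A Γ) :=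
  {a : A Γ | ∀ γ ∈ a.coeff.support, γ < 0}

/-- The degree of an element of `A` (`⊥` for `0`). -/
def adeg (a : A Γ) : WithBot Γ := a.coeff.support.max

variable {B W : Type} [Group W] {M : CoxeterMatrix B}
variable {H : Type} [Ring H]

/-- Bundled data of a Coxeter system `(W,S)` together with a positive weight function `L`,
its Hecke algebra `H` over `A = ℤ[Γ]` with standard basis `T`, the bar involution, and the
Kazhdan-Lusztig basis `C`. -/
structure KLData (M : CoxeterMatrix B) (W : Type) [Group W] (Γ : Type)
    [AddCommGroup Γ] [LinearOrder Γ] [IsOrderedAddMonoid Γ] (H : Type) [Ring H] [Algebra (A Γ) H] where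
  /-- the Coxeter system -/
  cs : CoxeterSystem M W
  /-- the weight function -/
  L : W → Γ
  L_add : ∀ w w' : W, cs.length (w * w') = cs.length w + cs.length w' →
    L (w * w') = L w + L w'
  L_pos : ∀ w : W, w ≠ 1 → 0 < L w
  /-- the standard basis `T_w` of the Hecke algebra -/
  bT : Module.Basis W (A Γ) H
  T_mul : ∀ w w' : W, cs.length (w * w') = cs.length w + cs.length w' →
    bT w * bT w' = bT (w * w')
  T_quad : ∀ i : B,
    (bT (cs.simple i) + algebraMap (A Γ) H (qe (-(L (cs.simple i))))) *
      (bT (cs.simple i) - algebraMap (A Γ) H (qe (L (cs.simple i)))) = 0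
  /-- the bar involution -/
  bar : H →+* H
  bar_bar : ∀ h : H, bar (bar h) = h
  bar_q : ∀ γ : Γ, bar (algebraMap (A Γ) H (qe γ)) = algebraMap (A Γ) H (qe (-γ))
  bar_T : ∀ w : W, bar (bT w) * bT w⁻¹ = 1
  bar_T' : ∀ w : W, bT w⁻¹ * bar (bT w) = 1
  /-- the Kazhdan-Lusztig basis `C_w` -/
  bC : Module.Basis W (A Γ) H
  bar_C : ∀ w : W, bar (bC w) = bC w
  C_mod : ∀ w v : W, bT.repr (bC w - bT w) v ∈ Alt0 Γ

namespace KLData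

variable [Algebra (A Γ) H] (d : KLData M W Γ H)

/-- `T_w` -/
def T (w : W) : H := d.bT w

/-- `C_w` -/
def C (w : W) : H := d.bC w

/-- `H_{<0} = ⊕_w A_{<0} T_w`. -/
def Hlt0 : Set H := {h : H | ∀ w : W, d.bT.repr h w ∈ Alt0 Γ}

/-- The structure constants `h_{x,y,z}` of the KL basis. -/
def hk (x y z : W) : A Γ := d.bC.repr (d.C x * d.C y) z

/-- One step of the preorder `≤_L` : `x` appears in `C_z C_y` for some `z`. -/
def leLstep (x y : W) : Prop := ∃ z : W, d.bC.repr (d.C z * d.C y) x ≠ 0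

/-- The preorder `≤_L`. -/
def leL : W → W → Prop := Relation.ReflTransGen d.leLstep

/-- `x ~_L y` -/
def simL (x y : W) : Prop := d.leL x y ∧ d.leL y x

/-- `x ≤_R y` -/
def leR (x y : W) : Prop := d.leL x⁻¹ y⁻¹

/-- `x ~_R y` -/
def simR (x y : W) : Prop := d.simL x⁻¹ y⁻¹

/-- The preorder `≤_LR`, generated by `≤_L` and `≤_R`. -/
def leLR : W → W → Prop :=
  Relation.ReflTransGen (fun x y => d.leLstep x y ∨ d.leLstep x⁻¹ y⁻¹)

/-- `x ~_LR y` -/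
def simLR (x y : W) : Prop := d.leLR x y ∧ d.leLR y x

/-- left cells -/
def IsLeftCell (Θ : Set W) : Prop := ∃ x : W, Θ = {y | d.simL x y}

/-- right cells -/
def IsRightCell (Φ : Set W) : Prop := ∃ x : W, Φ = {y | d.simR x y}

/-- two-sided cells -/
def IsTwoSidedCell (c : Set W) : Prop := ∃ x : W, c = {y | d.simLR x y}

/-- `z < c` for a two-sided cell `c`. -/
def ltc (c : Set W) (z : W) : Prop := z ∉ c ∧ ∀ w ∈ c, d.leLR z w

/-- `z ≤ c` for a two-sided cell `c`. -/
def lec (c : Set W) (z : W) : Prop := ∀ w ∈ c, d.leLR z w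

/-- The ideal `H_{<c}`, spanned by the `C_z` with `z < c`. -/
def Hltc (c : Set W) : Submodule (A Γ) H :=
  Submodule.span (A Γ) (d.C '' {z : W | d.ltc c z})

/-- Bruhat order on `W`. -/
def bruhatLE : W → W → Prop :=
  Relation.ReflTransGen (fun x y => ∃ t : W, d.cs.IsReflection t ∧ y = x * t ∧
    d.cs.length x < d.cs.length y)

/-- Strict Bruhat order on `W`. -/
def bruhatLT (x y : W) : Prop := d.bruhatLE x y ∧ x ≠ y

/-- Duflo order: `x ≤_D y` iff `l(x⁻¹y) = l(y) - l(x)`. -/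
def dufloLE (x y : W) : Prop :=
  d.cs.length x + d.cs.length (x⁻¹ * y) = d.cs.length y

/-- The `A`-linear anti-automorphism `♭` of `H` with `T_w ↦ T_{w⁻¹}`. -/
def flat : H →ₗ[A Γ] H := d.bT.constr ℕ (fun w => d.bT w⁻¹)

/-- `P_{e,z}` : the coefficient of `T_e` in `C_z`. -/
def Pel (z : W) : A Γ := d.bT.repr (d.C z) 1

/-- `Δ(z)`, defined by `P_{e,z} = n_z q^{-Δ(z)} + lower degree terms`. -/
def Del (z : W) : Γ := -(WithBot.unbotD 0 (d.Pel z).coeff.support.max)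

/-- `n_z`, defined by `P_{e,z} = n_z q^{-Δ(z)} + lower degree terms`. -/
def nz (z : W) : ℤ := (d.Pel z).coeff (-(d.Del z))

/-- `af : W → Γ` is Lusztig's `a`-function iff for each `z`, `af z` is the (attained)
supremum of the degrees of the `h_{x,y,z}`. -/
def IsAFunction (af : W → Γ) : Prop :=
  ∀ z : W, (∀ x y : W, adeg (d.hk x y z) ≤ (af z : WithBot Γ)) ∧
    (∃ x y : W, adeg (d.hk x y z) = (af z : WithBot Γ))

/-- `γ_{x,y,z}` : the coefficient of `q^{a(z⁻¹)}` in `h_{x,y,z⁻¹}`. -/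
def gam (af : W → Γ) (x y z : W) : ℤ := (d.hk x y z⁻¹).coeff (af z⁻¹)

/-- The set `𝒟 = {z | a(z) = Δ(z)}`. -/
def Dset (af : W → Γ) : Set W := {z : W | af z = d.Del z}

end KLData

variable [Algebra (A Γ) H]

/-- Assumption (*): a two-sided cell `c` equipped with subsets `D ⊆ c` and
`B_d, U_d ⊆ W` (`d ∈ D`) satisfying conditions (ia)-(iv). -/
structure CellDecomp (d : KLData M W Γ H) (c : Set W) where
  isCell : d.IsTwoSidedCell c
  D : Set W
  Bd : W → Set W
  Ud : W → Set W
  D_sub : D ⊆ c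
  -- (ia) : c = c⁻¹ = ⊔_{d ∈ D} B_d d U_d (disjoint union)
  c_inv : ∀ w : W, w ∈ c ↔ w⁻¹ ∈ c
  c_eq : c = ⋃ d0 ∈ D, {w : W | ∃ b ∈ Bd d0, ∃ u ∈ Ud d0, w = b * d0 * u}
  disj : ∀ d1 ∈ D, ∀ d2 ∈ D, d1 ≠ d2 →
    Disjoint {w : W | ∃ b ∈ Bd d1, ∃ u ∈ Ud d1, w = b * d1 * u}
             {w : W | ∃ b ∈ Bd d2, ∃ u ∈ Ud d2, w = b * d2 * u}
  -- (ib)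
  len_add : ∀ d0 ∈ D, ∀ b ∈ Bd d0, ∀ u ∈ Ud d0,
    d.cs.length (b * d0 * u) = d.cs.length b + d.cs.length d0 + d.cs.length u
  -- (ic)
  one_mem_B : ∀ d0 ∈ D, (1 : W) ∈ Bd d0
  one_mem_U : ∀ d0 ∈ D, (1 : W) ∈ Ud d0
  Binv_sub_U : ∀ d0 ∈ D, ∀ b ∈ Bd d0, b⁻¹ ∈ Ud d0
  -- (id)
  not_mem_c : ∀ d0 ∈ D, ∀ w : W, w ∉ Ud d0 →
    (∀ i : B, d.bruhatLE (d.cs.simple i) d0 →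
      d.cs.length (d.cs.simple i * w) = d.cs.length w + 1) → d0 * w ∉ c
  -- (iia) : each d ∈ D is an involution in a finite parabolic subgroup
  d_inv : ∀ d0 ∈ D, d0 * d0 = 1 ∧ d0 ≠ 1
  d_parabolic : ∀ d0 ∈ D, ∃ I : Set B,
    (Subgroup.closure (d.cs.simple '' I) : Set W).Finite ∧
    d0 ∈ Subgroup.closure (d.cs.simple '' I)
  s_len : ∀ d0 ∈ D, ∀ i : B, d.bruhatLE (d.cs.simple i) d0 →
    ∀ u ∈ Ud d0, d.cs.length (d.cs.simple i * u) = d.cs.length u + 1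
  -- (iib)
  TsC : ∀ d0 ∈ D, ∀ i : B, d.bruhatLE (d.cs.simple i) d0 →
    ∃ a : A Γ, d.T (d.cs.simple i) * d.C d0 - a • d.C d0 ∈ d.Hltc c
  -- (iic)
  h_ne : ∀ d0 ∈ D, d.hk d0 d0 d0 ≠ 0
  -- (iii)
  dU_rightCell : ∀ d0 ∈ D, d.IsRightCell {w : W | ∃ u ∈ Ud d0, w = d0 * u}
  -- (iv)
  TCT : ∀ d0 ∈ D, ∀ b ∈ Bd d0, ∀ u ∈ Ud d0,
    ∃ h0 ∈ d.Hlt0, ∃ h1 ∈ d.Hltc c,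
      d.T b * d.C d0 * d.T u - d.T (b * d0 * u) = h0 + h1

namespace CellDecomp

variable {d : KLData M W Γ H} {c : Set W} (cd : CellDecomp d c)

/-- `F` is the element `F_w` : `F = T_w + Σ_{y ∈ U_d, y < w} p_{y,w} T_y` with
`p_{y,w} ∈ A_{<0}`, and `C_d F ≡ C_{dw} mod H_{<c}`. -/
def IsF (d0 w : W) (F : H) : Prop :=
  (d.bT.repr F w = 1 ∧
    ∀ y : W, y ≠ w → d.bT.repr F y ≠ 0 →
      y ∈ cd.Ud d0 ∧ d.bruhatLT y w ∧ d.bT.repr F y ∈ Alt0 Γ) ∧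
  d.C d0 * F - d.C (d0 * w) ∈ d.Hltc c

/-- The right cell `Φ_{b,d} = b d U_d`. -/
def Phi (b d0 : W) : Set W := {x : W | ∃ u ∈ cd.Ud d0, x = b * d0 * u}

/-- The left cell `Θ_{b,d} = Φ_{b,d}⁻¹`. -/
def Theta (b d0 : W) : Set W := {x : W | ∃ u ∈ cd.Ud d0, x = u⁻¹ * d0 * b⁻¹}

end CellDecomp

/-- The Coxeter matrix of affine type C̃2: generators `s0 s1 s2`,
`(s0 s1)⁴ = (s1 s2)⁴ = (s0 s2)² = 1`. -/
def Ct2 : CoxeterMatrix (Fin 3) where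
  M := !![1, 4, 2; 4, 1, 4; 2, 4, 1]
  isSymm := by decide
  diagonal := by decide
  off_diagonal := by intro i j h; fin_cases i <;> fin_cases j <;> simp_all

/-- The Coxeter matrix of affine type G̃2: generators `s0 s1 s2`,
`(s0 s1)³ = (s1 s2)⁶ = (s0 s2)² = 1`. -/
def Gt2 : CoxeterMatrix (Fin 3) where
  M := !![1, 3, 2; 3, 1, 6; 2, 6, 1]
  isSymm := by decide
  diagonal := by decide
  off_diagonal := by intro i j h; fin_cases i <;> fin_cases j <;> simp_all

/-- `ξ_γ = q^γ - q^{-γ}`. -/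
def xi (γ : Γ) : A Γ := qe γ - qe (-γ)

/-- `η_γ = q^γ + q^{-γ}`. -/
def eta (γ : Γ) : A Γ := qe γ + qe (-γ)


namespace KLData

variable [Algebra (A Γ) H] (d : KLData M W Γ H)

/-- The free `A ⊗_ℤ A`-module with basis `{E_w : w ∈ c}`. -/
abbrev Emod (Γ : Type) [AddCommGroup Γ] [LinearOrder Γ] [IsOrderedAddMonoid Γ] {W : Type} (c : Set W) :=
  ↥c →₀ (A Γ ⊗[ℤ] A Γ)

/-- `C_x ⬝ E_w = Σ_{z ∈ c} (h_{x,w,z} ⊗ 1) E_z`. -/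
def lactB (c : Set W) (x : W) (w : ↥c) : Emod Γ c :=
  Finsupp.mapRange (fun a => a ⊗ₜ[ℤ] (1 : A Γ)) (by simp)
    ((d.bC.repr (d.C x * d.C (w : W))).subtypeDomain (· ∈ c))

/-- The left action of `C_x` on `E`, extended `(A ⊗ A)`-linearly from the basis. -/
def lact (c : Set W) (x : W) (v : Emod Γ c) : Emod Γ c :=
  v.sum fun w t => t • d.lactB c x w

/-- `E_w ⬝ C_y = Σ_{z ∈ c} (1 ⊗ h_{w,y,z}) E_z`. -/
def ractB (c : Set W) (y : W) (w : ↥c) : Emod Γ c :=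
  Finsupp.mapRange (fun a => (1 : A Γ) ⊗ₜ[ℤ] a) (by simp)
    ((d.bC.repr (d.C (w : W) * d.C y)).subtypeDomain (· ∈ c))

/-- The right action of `C_y` on `E`, extended `(A ⊗ A)`-linearly from the basis. -/
def ract (c : Set W) (y : W) (v : Emod Γ c) : Emod Γ c :=
  v.sum fun w t => t • d.ractB c y w

end KLData

end KL

open KL

namespace KL

variable {Γ : Type} [AddCommGroup Γ] [LinearOrder Γ] [IsOrderedAddMonoid Γ]

theorem coeff_mul_eq_zero_of_le_of_mem_Alt0 {a p : A Γ} {μ : Γ}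
    (ha : ∀ γ ∈ a.coeff.support, γ ≤ μ) (hp : p ∈ Alt0 Γ) : (a * p).coeff μ = 0 := by
  by_contra h
  obtain ⟨α, hα, β, hβ, hαβ⟩ := Finset.mem_add.1
    (AddMonoidAlgebra.support_coeff_mul_subset a p (Finsupp.mem_support_iff.2 h))
  have : α + β < μ := calc
    α + β < α := add_lt_of_neg_right α (hp β hβ)
    _ ≤ μ := ha α hα
  exact this.ne hαβ

/-- In a vanishing combination, read off the coefficients of `q^μ`, for `μ` the top degree
occurring among the coefficients, along the basis. -/
theorem linearIndependent_of_repr_sub_mem_Alt0 {ι κ M : Type*} [AddCommGroup M]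
    [Module (A Γ) M] (β : Module.Basis ι (A Γ) M) {v : κ → M} {f : κ → ι}
    (hf : Function.Injective f) (hv : ∀ k i, β.repr (v k - β (f k)) i ∈ Alt0 Γ) :
    LinearIndependent (A Γ) v := by
  rw [linearIndependent_iff]
  intro l hl
  by_contra hne
  set S := l.support.biUnion fun k => (l k).coeff.support
  have hS : S.Nonempty := by
    obtain ⟨k, hk⟩ := Finsupp.support_nonempty_iff.2 hne
    obtain ⟨γ, hγ⟩ := Finsupp.support_nonempty_iff.2
      (mt AddMonoidAlgebra.coeff_eq_zero.1 (Finsupp.mem_support_iff.1 hk))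
    exact ⟨γ, Finset.mem_biUnion.2 ⟨k, hk, hγ⟩⟩
  set μ := S.max' hS
  have hle : ∀ k, ∀ γ ∈ (l k).coeff.support, γ ≤ μ := by
    intro k γ hγ
    by_cases hk : k ∈ l.support
    · exact S.le_max' γ (Finset.mem_biUnion.2 ⟨k, hk, hγ⟩)
    · simp [Finsupp.notMem_support_iff.1 hk] at hγ
  have hterm : ∀ k' k, (l k' * β.repr (v k') (f k)).coeff μ =
      if k' = k then (l k).coeff μ else 0 := by
    intro k' k
    rw [← sub_add_cancel (v k') (β (f k')), map_add, Finsupp.add_apply, mul_add,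
      AddMonoidAlgebra.coeff_add, Finsupp.add_apply,
      coeff_mul_eq_zero_of_le_of_mem_Alt0 (hle k') (hv k' (f k)), zero_add, β.repr_self,
      Finsupp.single_apply, hf.eq_iff]
    split_ifs with h
    · rw [h, mul_one]
    · simp
  have hcoeff : ∀ k, (β.repr (Finsupp.linearCombination (A Γ) v l) (f k)).coeff μ =
      (l k).coeff μ := by
    intro k
    simp only [Finsupp.linearCombination_apply, Finsupp.sum, map_sum, map_smul,
      Finsupp.finsetSum_apply, Finsupp.smul_apply, smul_eq_mul,
      AddMonoidAlgebra.coeff_sum, hterm, Finset.sum_ite_eq']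
    split_ifs with hk
    · rfl
    · simp [Finsupp.notMem_support_iff.1 hk]
  obtain ⟨k, -, hμ⟩ := Finset.mem_biUnion.1 (S.max'_mem hS)
  exact Finsupp.mem_support_iff.1 hμ (by rw [← hcoeff k, hl]; simp)

variable {B W : Type} [Group W] {M : CoxeterMatrix B} {H : Type} [Ring H] [Algebra (A Γ) H]

theorem KLData.T_one (d : KLData M W Γ H) : d.T 1 = 1 := by
  have hmulLeft : LinearMap.mulLeft (A Γ) (d.T 1) = LinearMap.id :=
    d.bT.ext fun w => by
      simp [KLData.T, d.T_mul 1 w (by rw [one_mul, d.cs.length_one, zero_add])]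
  simpa using congrArg (fun φ : H →ₗ[A Γ] H => φ 1) hmulLeft

namespace CellDecomp

variable {d : KLData M W Γ H} {c : Set W} (cd : CellDecomp d c) {d0 u : W}

theorem mul_mem_of_mem_Ud (hd0 : d0 ∈ cd.D) (hu : u ∈ cd.Ud d0) : d0 * u ∈ c := by
  rw [cd.c_eq]
  exact Set.mem_biUnion hd0 ⟨1, cd.one_mem_B d0 hd0, u, hu, by rw [one_mul]⟩

theorem exists_C_mul_T_eq (hd0 : d0 ∈ cd.D) (hu : u ∈ cd.Ud d0) :
    ∃ h0 ∈ d.Hlt0, ∃ h1 ∈ d.Hltc c, d.C d0 * d.T u = d.T (d0 * u) + h0 + h1 := by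
  obtain ⟨h0, hh0, h1, hh1, h⟩ := cd.TCT d0 hd0 1 (cd.one_mem_B d0 hd0) u hu
  rw [d.T_one, one_mul, one_mul, sub_eq_iff_eq_add'] at h
  exact ⟨h0, hh0, h1, hh1, by rw [h, add_assoc]⟩

end CellDecomp

end KL

/-- under Assumption (*), the family `{C_d T_u + H_{<c} : u ∈ U_d}`
is `A`-linearly independent in `H / H_{<c}`. -/
theorem statement_2 {B W : Type} [Group W] {M : CoxeterMatrix B} {Γ : Type}
    [AddCommGroup Γ] [LinearOrder Γ] [IsOrderedAddMonoid Γ] {H : Type} [Ring H] [Algebra (A Γ) H]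
    (d : KLData M W Γ H) (c : Set W) (cd : CellDecomp d c)
    (d0 : W) (hd0 : d0 ∈ cd.D) :
    LinearIndependent (A Γ) (fun u : cd.Ud d0 =>
      (Submodule.Quotient.mk (d.C d0 * d.T (u : W)) : H ⧸ d.Hltc c)) := by
  choose h0 hh0 h1 hh1 hC using fun u : cd.Ud d0 => cd.exists_C_mul_T_eq hd0 u.2
  let v : cd.Ud d0 → H := fun u => d.T (d0 * u) + h0 u
  have hf : Function.Injective
      (Sum.elim (fun u : cd.Ud d0 => d0 * u) (fun z : {z // d.ltc c z} => (z : W))) :=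
    (mul_right_injective d0 |>.comp Subtype.val_injective).sumElim Subtype.val_injective
      fun u z h => z.2.1 (h ▸ cd.mul_mem_of_mem_Ud hd0 u.2)
  have hli : LinearIndependent (A Γ) (Sum.elim v fun z : {z // d.ltc c z} => d.C z) :=
    linearIndependent_of_repr_sub_mem_Alt0 d.bT hf <| by
      rintro (u | z) w
      · simpa [v, KLData.T] using hh0 u w
      · exact d.C_mod z w
  obtain ⟨hv, -, hdisj⟩ := linearIndependent_sum.1 hli
  have hspan : Submodule.span (A Γ) (Set.range fun z : {z // d.ltc c z} => d.C z) = d.Hltc c := by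
    rw [KLData.Hltc, Set.image_eq_range]; rfl
  rw [Sum.elim_comp_inr, hspan, ← Submodule.ker_mkQ (d.Hltc c)] at hdisj
  have hmk : (fun u : cd.Ud d0 => (Submodule.Quotient.mk (d.C d0 * d.T u) : H ⧸ d.Hltc c)) =
      (d.Hltc c).mkQ ∘ (Sum.elim v (fun z : {z // d.ltc c z} => d.C z) ∘ Sum.inl) := by
    funext u
    simp [v, hC, hh1]
  rw [hmk]
  exact hv.map hdisj
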